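/- arXiv:0710.1979 — 2 statements merged into one kernel-verified Lean document; each statement's English description precedes it below -/
import Mathlib

section
/- Let G be a group with center Z = Z(G) and let K be a subgroup of G containing Z. Suppose Z has finite index in K. Then the quotient C/C_G(K) is abelian, where C = { g ∈ G : [g,k] ∈ Z for all k ∈ K } is the preimage in G of the centralizer of K/Z in G/Z. -/
open scoped commutatorElement

/-- Auxiliary algebraic lemma: if conjugation by `g₁` and by `g₂` each move
`k` by a central factor, then `⁅g₁, g₂⁆` commutes with `k`. -/
lemma kaluzhnin_aux {G : Type*} [Group G] (g₁ g₂ k c₁ c₂ : G)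
    (h₁ : g₁⁻¹ * k * g₁ = k * c₁) (h₂ : g₂⁻¹ * k * g₂ = k * c₂)
    (hc₁ : ∀ x : G, c₁ * x = x * c₁) (hc₂ : ∀ x : G, c₂ * x = x * c₂) :
    k * ⁅g₁, g₂⁆ = ⁅g₁, g₂⁆ * k := by
  have e12 : (g₁ * g₂)⁻¹ * k * (g₁ * g₂) = k * c₂ * c₁ := by
    calc (g₁ * g₂)⁻¹ * k * (g₁ * g₂) = g₂⁻¹ * (g₁⁻¹ * k * g₁) * g₂ := by group
      _ = g₂⁻¹ * (k * c₁) * g₂ := by rw [h₁]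
      _ = g₂⁻¹ * k * (c₁ * g₂) := by group
      _ = g₂⁻¹ * k * (g₂ * c₁) := by rw [hc₁]
      _ = (g₂⁻¹ * k * g₂) * c₁ := by group
      _ = k * c₂ * c₁ := by rw [h₂]
  have e21 : (g₂ * g₁)⁻¹ * k * (g₂ * g₁) = k * c₂ * c₁ := by
    calc (g₂ * g₁)⁻¹ * k * (g₂ * g₁) = g₁⁻¹ * (g₂⁻¹ * k * g₂) * g₁ := by group
      _ = g₁⁻¹ * (k * c₂) * g₁ := by rw [h₂]
      _ = g₁⁻¹ * k * (c₂ * g₁) := by group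
      _ = g₁⁻¹ * k * (g₁ * c₂) := by rw [hc₂]
      _ = (g₁⁻¹ * k * g₁) * c₂ := by group
      _ = k * c₁ * c₂ := by rw [h₁]
      _ = k * (c₁ * c₂) := by group
      _ = k * (c₂ * c₁) := by rw [hc₁ c₂]
      _ = k * c₂ * c₁ := by group
  have eq : (g₁ * g₂)⁻¹ * k * (g₁ * g₂) = (g₂ * g₁)⁻¹ * k * (g₂ * g₁) :=
    e12.trans e21.symm
  calc k * ⁅g₁, g₂⁆
      = (g₁ * g₂) * ((g₁ * g₂)⁻¹ * k * (g₁ * g₂)) * (g₂ * g₁)⁻¹ := by group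
    _ = (g₁ * g₂) * ((g₂ * g₁)⁻¹ * k * (g₂ * g₁)) * (g₂ * g₁)⁻¹ := by rw [eq]
    _ = ⁅g₁, g₂⁆ * k := by group

/-- Kalužnin-type statement: let `Z = Z(G) ≤ K` with `Z` of finite index
in `K`, and let `C` be the preimage in `G` of the centralizer of `K/Z` in
`G/Z`, i.e. the set of `g` with `[g,k] ∈ Z` for all `k ∈ K`. Then
`C / C_G(K)` is abelian: the commutator of any two elements of `C` lies in
`C_G(K)`. -/
theorem kaluzhnin_stability (G : Type*) [Group G] (K : Subgroup G)
    (hZK : Subgroup.center G ≤ K)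
    (hfin : ((Subgroup.center G).subgroupOf K).FiniteIndex) :
    ∀ g₁ g₂ : G,
      (∀ k ∈ K, g₁⁻¹ * k⁻¹ * g₁ * k ∈ Subgroup.center G) →
      (∀ k ∈ K, g₂⁻¹ * k⁻¹ * g₂ * k ∈ Subgroup.center G) →
      ⁅g₁, g₂⁆ ∈ Subgroup.centralizer (K : Set G) := by
  intro g₁ g₂ h₁ h₂
  rw [Subgroup.mem_centralizer_iff]
  intro k hk
  have hc₁ := Subgroup.mem_center_iff.mp (inv_mem (h₁ k hk))
  have hc₂ := Subgroup.mem_center_iff.mp (inv_mem (h₂ k hk))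
  exact kaluzhnin_aux g₁ g₂ k (g₁⁻¹ * k⁻¹ * g₁ * k)⁻¹ (g₂⁻¹ * k⁻¹ * g₂ * k)⁻¹
    (by group) (by group)
    (fun x => (hc₁ x).symm) (fun x => (hc₂ x).symm)
end

section
/- If a group G has a normal subgroup N such that both N and G/N are locally graded, then G is locally graded. -/
/-- A group is locally graded if every finitely generated nontrivial subgroup
has a proper subgroup of finite index. -/
def LocallyGraded (G : Type*) [Group G] : Prop :=
  ∀ H : Subgroup G, H.FG → H ≠ ⊥ → ∃ K : Subgroup H, K.FiniteIndex ∧ K ≠ ⊤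

/-- Pull back a proper finite-index subgroup along a surjective homomorphism. -/
lemma pull_finiteIndex {A B : Type*} [Group A] [Group B] (f : A →* B)
    (hf : Function.Surjective f) (K : Subgroup B) (h1 : K.FiniteIndex) (h2 : K ≠ ⊤) :
    ∃ K' : Subgroup A, K'.FiniteIndex ∧ K' ≠ ⊤ := by
  refine ⟨K.comap f, ⟨?_⟩, ?_⟩
  · rw [Subgroup.index_comap_of_surjective _ hf]
    exact h1.index_ne_zero
  · intro h
    apply h2
    have := Subgroup.comap_injective (f := f) hf
    have : K.comap f = (⊤ : Subgroup B).comap f := by simpa using h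
    exact Subgroup.comap_injective hf this

/-- If `N` is normal in `G` and both `N` and `G/N` are locally graded, then
`G` is locally graded. -/
theorem locallyGraded_of_normal_quotient (G : Type*) [Group G]
    (N : Subgroup G) [N.Normal]
    (hN : LocallyGraded N) (hQ : LocallyGraded (G ⧸ N)) :
    LocallyGraded G := by
  intro H hFG hne
  by_cases hle : H ≤ N
  · -- H is (isomorphic to) a subgroup of N
    set H' : Subgroup N := H.subgroupOf N with hH'
    have e : H' ≃* H := Subgroup.subgroupOfEquivOfLe hle
    have hfg : Group.FG H := (Group.fg_iff_subgroup_fg H).mpr hFG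
    have hfg' : H'.FG := by
      rw [← Group.fg_iff_subgroup_fg]
      exact Group.fg_of_surjective (f := e.symm.toMonoidHom) e.symm.surjective
    haveI hnt : Nontrivial H := (Subgroup.nontrivial_iff_ne_bot H).mpr hne
    have hnt' : Nontrivial H' := e.toEquiv.nontrivial
    have hne' : H' ≠ ⊥ := (Subgroup.nontrivial_iff_ne_bot H').mp hnt'
    obtain ⟨K, hK1, hK2⟩ := hN H' hfg' hne'
    exact pull_finiteIndex e.symm.toMonoidHom e.symm.surjective K hK1 hK2
  · -- H maps onto a nontrivial subgroup of G/N
    set M : Subgroup (G ⧸ N) := H.map (QuotientGroup.mk' N) with hM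
    have hMfg : M.FG := by
      obtain ⟨S, hS⟩ := hFG
      rw [Subgroup.fg_iff]
      exact ⟨(QuotientGroup.mk' N) '' S, by
        rw [hM, ← hS, MonoidHom.map_closure], (S.finite_toSet.image _)⟩
    have hMne : M ≠ ⊥ := by
      intro h
      apply hle
      rw [hM, Subgroup.map_eq_bot_iff, QuotientGroup.ker_mk'] at h
      exact h
    obtain ⟨K, hK1, hK2⟩ := hQ M hMfg hMne
    have hmem : ∀ x : H, (QuotientGroup.mk' N).comp H.subtype x ∈ M :=
      fun x => ⟨(x : G), x.2, rfl⟩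
    let f : H →* M := ((QuotientGroup.mk' N).comp H.subtype).codRestrict M hmem
    have hf : Function.Surjective f := by
      rintro ⟨y, hy⟩
      obtain ⟨x, hx, hxy⟩ := hy
      exact ⟨⟨x, hx⟩, Subtype.ext hxy⟩
    exact pull_finiteIndex f hf K hK1 hK2
end
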